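/- arXiv:2311.05360 — 4 statements merged into one kernel-verified Lean document; each statement's English description precedes it below -/
import Mathlib

section
/- Let Φ be a real (L+1)×T matrix such that Φ·Φᵀ is invertible, let Y_f be a real q×T matrix, let Θ* := Y_f·Φᵀ·(Φ·Φᵀ)⁻¹ and let E := Y_f − Θ*·Φ. Then the following are equivalent: (i) for every vector b ∈ ℝ^{L+1} and every vector g ∈ ℝ^T satisfying Φ·g = b, one has Y_f·g = Θ*·b; (ii) for every vector ĝ ∈ ℝ^T satisfying Φ·ĝ = 0, one has E·ĝ = 0. (Equivalence of the basis-functions DeePC behavioral predictor with the basis-functions SPC identified predictor.) -/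
open Matrix

/-!
Condition (i) says that `Y_f = Θ* Φ`, i.e. `E = 0`, while (ii) says that `E` vanishes on `ker Φ`.
Since `P := Φᵀ (Φ Φᵀ)⁻¹` is a right inverse of `Φ` and `E P = 0`, every `g` splits as
`(g - P Φ g) + P Φ g` with the first summand in `ker Φ`, so `E` vanishing on `ker Φ` forces `E = 0`.
-/

namespace Matrix

variable {l m n R : Type*} [Fintype m] [Fintype n] [CommRing R]

theorem forall_mulVec_eq_of_mulVec_eq_iff {Φ : Matrix m n R} {Y : Matrix l n R}
    {Θ : Matrix l m R} : (∀ b g, Φ *ᵥ g = b → Y *ᵥ g = Θ *ᵥ b) ↔ Y = Θ * Φ := by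
  refine ⟨fun h => mulVec_injective (funext fun g => ?_), ?_⟩
  · rw [h _ g rfl, mulVec_mulVec]
  · rintro rfl b g rfl
    rw [mulVec_mulVec]

variable [DecidableEq m]

theorem mul_mul_nonsing_inv_eq_one {Φ : Matrix m n R} {Ψ : Matrix n m R}
    (h : IsUnit (Φ * Ψ)) : Φ * (Ψ * (Φ * Ψ)⁻¹) = 1 := by
  rw [← Matrix.mul_assoc]
  exact mul_nonsing_inv _ ((isUnit_iff_isUnit_det _).mp h)

theorem sub_mul_mul_mul_eq_zero_of_mul_eq_one {Φ : Matrix m n R} {P : Matrix n m R}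
    (Y : Matrix l n R) (hΦP : Φ * P = 1) : (Y - Y * P * Φ) * P = 0 := by
  rw [Matrix.sub_mul, Matrix.mul_assoc (Y * P), hΦP, Matrix.mul_one, sub_self]

theorem forall_mulVec_eq_zero_of_mulVec_eq_zero_iff {Φ : Matrix m n R} {P : Matrix n m R}
    {E : Matrix l n R} (hΦP : Φ * P = 1) (hEP : E * P = 0) :
    (∀ g, Φ *ᵥ g = 0 → E *ᵥ g = 0) ↔ E = 0 := by
  refine ⟨fun h => mulVec_injective (funext fun g => ?_), fun hE g _ => by simp [hE]⟩
  have hker : Φ *ᵥ (g - P *ᵥ (Φ *ᵥ g)) = 0 := by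
    rw [mulVec_sub, mulVec_mulVec, hΦP, one_mulVec, sub_self]
  calc E *ᵥ g = E *ᵥ (g - P *ᵥ (Φ *ᵥ g)) + (E * P) *ᵥ (Φ *ᵥ g) := by
        rw [mulVec_sub, ← mulVec_mulVec, sub_add_cancel]
    _ = 0 *ᵥ g := by rw [h _ hker, hEP, zero_mulVec, add_zero, zero_mulVec]

end Matrix

/-- Equivalence of the basis-functions DeePC behavioral predictor with the
basis-functions SPC identified predictor. -/
theorem phi_deepc_spc_equivalence
    {L T q : ℕ}
    (Φ : Matrix (Fin (L + 1)) (Fin T) ℝ)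
    (Yf : Matrix (Fin q) (Fin T) ℝ)
    (hΦ : IsUnit (Φ * Φᵀ))
    (Θstar : Matrix (Fin q) (Fin (L + 1)) ℝ)
    (hΘ : Θstar = Yf * Φᵀ * (Φ * Φᵀ)⁻¹)
    (E : Matrix (Fin q) (Fin T) ℝ)
    (hE : E = Yf - Θstar * Φ) :
    (∀ (b : Fin (L + 1) → ℝ) (g : Fin T → ℝ),
        Φ *ᵥ g = b → Yf *ᵥ g = Θstar *ᵥ b) ↔
      (∀ ghat : Fin T → ℝ, Φ *ᵥ ghat = 0 → E *ᵥ ghat = 0) := by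
  have hright := mul_mul_nonsing_inv_eq_one hΦ
  subst hΘ hE
  rw [Matrix.mul_assoc Yf, forall_mulVec_eq_of_mulVec_eq_iff, ← sub_eq_zero,
    forall_mulVec_eq_zero_of_mulVec_eq_zero_iff hright
      (sub_mul_mul_mul_eq_zero_of_mul_eq_one Yf hright)]
end

section
/- Let Φ be a real (L+1)×T matrix such that Φ·Φᵀ is invertible, let Y_f be a real q×T matrix, let Θ* := Y_f·Φᵀ·(Φ·Φᵀ)⁻¹ and let E := Y_f − Θ*·Φ. Then for every vector b ∈ ℝ^{L+1}, the set of φ-DeePC predicted outputs {Y_f·g : g ∈ ℝ^T, Φ·g = b} equals the set {Θ*·b + E·ĝ : ĝ ∈ ℝ^T, Φ·ĝ = 0}. -/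
/-!
Since `Φ * Φᵀ` is invertible, `P := Φᵀ * (Φ * Φᵀ)⁻¹` is a right inverse of `Φ`, so the solutions of
`Φ * g = b` are exactly `g = P * b + ĝ` with `Φ * ĝ = 0`. Then `Yf * g = Θ* * b + Yf * ĝ` because
`Θ* = Yf * P`, and on the null space of `Φ` the residual map `E = Yf - Θ* * Φ` agrees with `Yf`.
-/

open Matrix

namespace Matrix

variable {R m n p : Type*} [Fintype m] [Fintype n]

theorem mul_mul_nonsing_inv_of_isUnit [CommRing R] [DecidableEq m]
    (A : Matrix m n R) (B : Matrix n m R) (h : IsUnit (A * B)) :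
    A * (B * (A * B)⁻¹) = 1 := by
  rw [← Matrix.mul_assoc, mul_nonsing_inv _ ((isUnit_iff_isUnit_det _).mp h)]

theorem sub_mul_mulVec_of_mulVec_eq_zero [Ring R] [Fintype p] {Φ : Matrix m n R}
    (Y : Matrix p n R) (Θ : Matrix p m R) {ĝ : n → R} (hĝ : Φ *ᵥ ĝ = 0) :
    (Y - Θ * Φ) *ᵥ ĝ = Y *ᵥ ĝ := by
  rw [sub_mulVec, ← mulVec_mulVec, hĝ, mulVec_zero, sub_zero]

section RightInverse

variable [Ring R] [DecidableEq m] {Φ : Matrix m n R} {P : Matrix n m R}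

theorem mulVec_eq_iff_exists_of_mul_eq_one (hP : Φ * P = 1) (b : m → R) (g : n → R) :
    Φ *ᵥ g = b ↔ ∃ ĝ, Φ *ᵥ ĝ = 0 ∧ g = P *ᵥ b + ĝ := by
  have hΦP : Φ *ᵥ (P *ᵥ b) = b := by rw [mulVec_mulVec, hP, one_mulVec]
  constructor
  · rintro rfl
    exact ⟨g - P *ᵥ (Φ *ᵥ g), by rw [mulVec_sub, hΦP, sub_self], by abel⟩
  · rintro ⟨ĝ, hĝ, rfl⟩
    rw [mulVec_add, hĝ, hΦP, add_zero]

theorem setOf_mulVec_of_mulVec_eq_eq_of_mul_eq_one [Fintype p] (hP : Φ * P = 1)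
    (Y : Matrix p n R) (b : m → R) :
    {y | ∃ g, Φ *ᵥ g = b ∧ y = Y *ᵥ g} =
      {y | ∃ ĝ, Φ *ᵥ ĝ = 0 ∧ y = (Y * P) *ᵥ b + (Y - Y * P * Φ) *ᵥ ĝ} := by
  have hY {ĝ : n → R} (hĝ : Φ *ᵥ ĝ = 0) :
      Y *ᵥ (P *ᵥ b + ĝ) = (Y * P) *ᵥ b + (Y - Y * P * Φ) *ᵥ ĝ := by
    rw [sub_mul_mulVec_of_mulVec_eq_zero _ _ hĝ, mulVec_add, mulVec_mulVec]
  ext y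
  constructor
  · rintro ⟨g, hg, rfl⟩
    obtain ⟨ĝ, hĝ, rfl⟩ := (mulVec_eq_iff_exists_of_mul_eq_one hP b g).mp hg
    exact ⟨ĝ, hĝ, hY hĝ⟩
  · rintro ⟨ĝ, hĝ, rfl⟩
    exact ⟨_, (mulVec_eq_iff_exists_of_mul_eq_one hP b _).mpr ⟨ĝ, hĝ, rfl⟩, (hY hĝ).symm⟩

end RightInverse

end Matrix

/-- The φ-DeePC prediction set is the φ-SPC prediction perturbed by residuals
acting on the null space of Φ. -/
theorem deepc_prediction_set_eq
    {L T q : ℕ}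
    (Φ : Matrix (Fin (L + 1)) (Fin T) ℝ)
    (Yf : Matrix (Fin q) (Fin T) ℝ)
    (hΦ : IsUnit (Φ * Φᵀ))
    (Θstar : Matrix (Fin q) (Fin (L + 1)) ℝ)
    (hΘ : Θstar = Yf * Φᵀ * (Φ * Φᵀ)⁻¹)
    (E : Matrix (Fin q) (Fin T) ℝ)
    (hE : E = Yf - Θstar * Φ) :
    ∀ b : Fin (L + 1) → ℝ,
      {y : Fin q → ℝ | ∃ g : Fin T → ℝ, Φ *ᵥ g = b ∧ y = Yf *ᵥ g} =
        {y : Fin q → ℝ | ∃ ghat : Fin T → ℝ,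
          Φ *ᵥ ghat = 0 ∧ y = Θstar *ᵥ b + E *ᵥ ghat} := by
  intro b
  subst hE hΘ
  rw [Matrix.mul_assoc Yf Φᵀ]
  exact setOf_mulVec_of_mulVec_eq_eq_of_mul_eq_one (mul_mul_nonsing_inv_of_isUnit Φ Φᵀ hΦ) Yf b
end

section
/- Let Φ be a real (L+1)×T matrix, let Y_f be a real q×T matrix, let γ > 0 be such that Φ·Φᵀ + γ·I is positive definite (hence invertible), and let Θ^{R*} := Y_f·Φᵀ·(Φ·Φᵀ + γ·I)⁻¹. Then for every vector b ∈ ℝ^{L+1} there exists a unique g ∈ ℝ^{L+1} satisfying (Φ·Φᵀ + γ·I)·g = b, and this g satisfies Y_f·Φᵀ·g = Θ^{R*}·b. Consequently, the ridge φ-DeePC predictor is single-valued and coincides with the ridge-regression φ-SPC predictor b ↦ Θ^{R*}·b. -/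
open Matrix

namespace Matrix

variable {m n R : Type*} [Fintype n] [DecidableEq n] [CommRing R]

theorem existsUnique_mulVec_eq {A : Matrix n n R} (hA : IsUnit A) (b : n → R) :
    ∃! g, A *ᵥ g = b := by
  rw [isUnit_iff_isUnit_det] at hA
  refine ⟨A⁻¹ *ᵥ b, ?_, fun g hg => ?_⟩
  · change A *ᵥ A⁻¹ *ᵥ b = b
    rw [mulVec_mulVec, mul_nonsing_inv A hA, one_mulVec]
  · rw [← hg, mulVec_mulVec, nonsing_inv_mul A hA, one_mulVec]

theorem mulVec_eq_mul_nonsing_inv_mulVec {A : Matrix n n R} (hA : IsUnit A) (B : Matrix m n R)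
    {g b : n → R} (hg : A *ᵥ g = b) : B *ᵥ g = (B * A⁻¹) *ᵥ b := by
  rw [← hg, mulVec_mulVec, Matrix.mul_assoc, nonsing_inv_mul A ((isUnit_iff_isUnit_det A).1 hA),
    Matrix.mul_one]

end Matrix

theorem ridge_deepc_spc_equivalence_general
    {L T q : ℕ}
    (Φ : Matrix (Fin (L + 1)) (Fin T) ℝ)
    (Yf : Matrix (Fin q) (Fin T) ℝ)
    (γ : ℝ)
    (hpos : (Φ * Φᵀ + γ • (1 : Matrix (Fin (L + 1)) (Fin (L + 1)) ℝ)).PosDef)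
    (ΘR : Matrix (Fin q) (Fin (L + 1)) ℝ)
    (hΘR : ΘR = Yf * Φᵀ *
      (Φ * Φᵀ + γ • (1 : Matrix (Fin (L + 1)) (Fin (L + 1)) ℝ))⁻¹) :
    ∀ b : Fin (L + 1) → ℝ,
      (∃! g : Fin (L + 1) → ℝ,
        (Φ * Φᵀ + γ • (1 : Matrix (Fin (L + 1)) (Fin (L + 1)) ℝ)) *ᵥ g = b) ∧
      ∀ g : Fin (L + 1) → ℝ,
        (Φ * Φᵀ + γ • (1 : Matrix (Fin (L + 1)) (Fin (L + 1)) ℝ)) *ᵥ g = b →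
          (Yf * Φᵀ) *ᵥ g = ΘR *ᵥ b := by
  subst hΘR
  exact fun b => ⟨existsUnique_mulVec_eq hpos.isUnit b,
    fun _ hg => mulVec_eq_mul_nonsing_inv_mulVec hpos.isUnit (Yf * Φᵀ) hg⟩

/-- The ridge φ-DeePC predictor is single-valued and coincides with the
ridge-regression φ-SPC predictor b ↦ Θ^{R*}·b. -/
theorem ridge_deepc_spc_equivalence
    {L T q : ℕ}
    (Φ : Matrix (Fin (L + 1)) (Fin T) ℝ)
    (Yf : Matrix (Fin q) (Fin T) ℝ)
    (γ : ℝ) (hγ : 0 < γ)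
    (hpos : (Φ * Φᵀ + γ • (1 : Matrix (Fin (L + 1)) (Fin (L + 1)) ℝ)).PosDef)
    (ΘR : Matrix (Fin q) (Fin (L + 1)) ℝ)
    (hΘR : ΘR = Yf * Φᵀ *
      (Φ * Φᵀ + γ • (1 : Matrix (Fin (L + 1)) (Fin (L + 1)) ℝ))⁻¹) :
    ∀ b : Fin (L + 1) → ℝ,
      (∃! g : Fin (L + 1) → ℝ,
        (Φ * Φᵀ + γ • (1 : Matrix (Fin (L + 1)) (Fin (L + 1)) ℝ)) *ᵥ g = b) ∧
      ∀ g : Fin (L + 1) → ℝ,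
        (Φ * Φᵀ + γ • (1 : Matrix (Fin (L + 1)) (Fin (L + 1)) ℝ)) *ᵥ g = b →
          (Yf * Φᵀ) *ᵥ g = ΘR *ᵥ b :=
  ridge_deepc_spc_equivalence_general Φ Yf γ hpos ΘR hΘR
end

section
/- Let Φ be a real (L+1)×T matrix such that Φ·Φᵀ is invertible, let Y_f be a real q×T matrix, let Θ* := Y_f·Φᵀ·(Φ·Φᵀ)⁻¹ and E := Y_f − Θ*·Φ. Fix b ∈ ℝ^{L+1} and set g_r := Φᵀ·(Φ·Φᵀ)⁻¹·b. Then the set of pairs {(Y_f·g, ‖g − g_r‖₂²) : g ∈ ℝ^T, Φ·g = b} equals the set of pairs {(Θ*·b + E·ĝ, ‖ĝ‖₂²) : ĝ ∈ ℝ^T, Φ·ĝ = 0}. In particular, the regularized formulations φ-DeePC-R1 (variables g with constraint Φ·g = b and regularization λ‖g − g_r‖₂²) and φ-DeePC-R2 (variables ĝ with constraint Φ·ĝ = 0, predictions Y_f·(g_r + ĝ) and regularization λ‖ĝ‖₂²) have identical feasible prediction–cost pairs, hence produce identical predicted outputs for the same λ. -/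
/-!
The substitution g = g_r + ĝ identifies the two feasible sets, because Φ g_r = b. Under it
Y_f g = Y_f g_r + Y_f ĝ, where Y_f g_r = Θ* b, and E ĝ = Y_f ĝ because Φ ĝ = 0.
-/

open Matrix

section

variable {m n R : Type*} [Fintype n] [Ring R]

theorem Matrix.exists_mulVec_eq_iff_exists_mulVec_eq_zero {Φ : Matrix m n R} {g₀ : n → R}
    {b : m → R} (hg₀ : Φ *ᵥ g₀ = b) (P : (n → R) → Prop) :
    (∃ g, Φ *ᵥ g = b ∧ P g) ↔ ∃ ĝ, Φ *ᵥ ĝ = 0 ∧ P (g₀ + ĝ) := by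
  constructor
  · rintro ⟨g, hg, hP⟩
    refine ⟨g - g₀, by rw [mulVec_sub, hg, hg₀, sub_self], ?_⟩
    rwa [add_sub_cancel]
  · rintro ⟨ĝ, hĝ, hP⟩
    exact ⟨g₀ + ĝ, by rw [mulVec_add, hg₀, hĝ, add_zero], hP⟩

theorem Matrix.sub_mul_mulVec_of_mulVec_eq_zero_s9 {l : Type*} [Fintype m] (Y : Matrix l n R)
    (Θ : Matrix l m R) {Φ : Matrix m n R} {v : n → R} (hv : Φ *ᵥ v = 0) :
    (Y - Θ * Φ) *ᵥ v = Y *ᵥ v := by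
  rw [sub_mulVec, ← mulVec_mulVec, hv, mulVec_zero, sub_zero]

end

/-- The regularized formulations φ-DeePC-R1 and φ-DeePC-R2 have identical
feasible prediction–cost pairs. -/
theorem deepc_R1_R2_equivalence
    {L T q : ℕ}
    (Φ : Matrix (Fin (L + 1)) (Fin T) ℝ)
    (Yf : Matrix (Fin q) (Fin T) ℝ)
    (hΦ : IsUnit (Φ * Φᵀ))
    (Θstar : Matrix (Fin q) (Fin (L + 1)) ℝ)
    (hΘ : Θstar = Yf * Φᵀ * (Φ * Φᵀ)⁻¹)
    (E : Matrix (Fin q) (Fin T) ℝ)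
    (hE : E = Yf - Θstar * Φ)
    (b : Fin (L + 1) → ℝ)
    (gr : Fin T → ℝ)
    (hgr : gr = (Φᵀ * (Φ * Φᵀ)⁻¹) *ᵥ b) :
    {p : (Fin q → ℝ) × ℝ | ∃ g : Fin T → ℝ,
        Φ *ᵥ g = b ∧ p = (Yf *ᵥ g, ∑ i, (g i - gr i) ^ 2)} =
      {p : (Fin q → ℝ) × ℝ | ∃ ghat : Fin T → ℝ,
        Φ *ᵥ ghat = 0 ∧ p = (Θstar *ᵥ b + E *ᵥ ghat, ∑ i, (ghat i) ^ 2)} := by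
  have hΦgr : Φ *ᵥ gr = b := by
    rw [hgr, mulVec_mulVec, ← Matrix.mul_assoc,
      mul_nonsing_inv _ ((isUnit_iff_isUnit_det _).mp hΦ), one_mulVec]
  have hYfgr : Yf *ᵥ gr = Θstar *ᵥ b := by
    rw [hΘ, hgr, mulVec_mulVec, Matrix.mul_assoc]
  ext p
  refine (exists_mulVec_eq_iff_exists_mulVec_eq_zero hΦgr _).trans
    (exists_congr fun ĝ => and_congr_right fun hĝ => ?_)
  rw [hE, sub_mul_mulVec_of_mulVec_eq_zero_s9 Yf Θstar hĝ, mulVec_add, hYfgr]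
  simp only [Pi.add_apply, add_sub_cancel_left]
end
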